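/- Let n ≥ k ≥ 2 be positive integers with k ≡ 2 or 3 (mod 4) and with C(n,k) odd. Then the coefficient of t^{n(n−1)/2} in P_{n,k}(t) equals Σ_{M ∈ E_{n(n−1)/2} \ E°} (−1)^{|M|}. -/

import Mathlib

open Finset

/-- Row index type: `2`-element subsets of `[n]`. -/
abbrev RowIdx (n : ℕ) := {e : Finset (Fin n) // e ∈ Finset.powersetCard 2 (Finset.univ : Finset (Fin n))}

/-- Column index type: `k`-element subsets of `[n]`. -/
abbrev ColIdx (n k : ℕ) := {S : Finset (Fin n) // S ∈ Finset.powersetCard k (Finset.univ : Finset (Fin n))}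

/-- The incidence matrix `I(n,k)`, with `(e,S)`-entry `true` iff `e ⊆ S`.
`{0,1}`-matrices are encoded as `Bool`-valued matrices. -/
def Ink (n k : ℕ) : Matrix (RowIdx n) (ColIdx n k) Bool :=
  Matrix.of fun e S => decide (e.1 ⊆ S.1)

/-- `|M|`: the total number of ones (entries equal to `true`) of `M`. -/
def wt {n k : ℕ} (M : Matrix (RowIdx n) (ColIdx n k) Bool) : ℕ :=
  (Finset.univ.filter fun p : RowIdx n × ColIdx n k => M p.1 p.2 = true).card

/-- `Edges(M)`: the set of rows of `M` containing at least one `1`. -/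
def mEdges {n k : ℕ} (M : Matrix (RowIdx n) (ColIdx n k) Bool) : Finset (RowIdx n) :=
  haveI := fun e S => instDecidableEqBool (M e S) true
  Finset.univ.filter fun e => ∃ S, M e S = true

/-- The set `A'` of `{0,1}`-matrices `M ⪯ I(n,k)` each of whose columns has at least `1`
and at most `C(k,2) - 1` ones. -/
def matA (n k : ℕ) : Finset (Matrix (RowIdx n) (ColIdx n k) Bool) :=
  haveI := fun (M : Matrix (RowIdx n) (ColIdx n k) Bool) e S => instDecidableEqBool (M e S) true
  Finset.univ.filter fun M =>
    (∀ e S, M e S = true → Ink n k e S = true) ∧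
    ∀ S : ColIdx n k,
      1 ≤ (Finset.univ.filter fun e => M e S = true).card ∧
      (Finset.univ.filter fun e => M e S = true).card ≤ k.choose 2 - 1

/-- `E_m`: the set of `M ∈ A'` with `|Edges(M)| = m`. -/
def matE (n k m : ℕ) : Finset (Matrix (RowIdx n) (ColIdx n k) Bool) :=
  (matA n k).filter fun M => (mEdges M).card = m

/-- `E°`: the set of `M ∈ E_{C(n,2)}` each of whose rows has at least `1` and at most
`C(n-2,k-2) - 1` ones. -/
def matEcirc (n k : ℕ) : Finset (Matrix (RowIdx n) (ColIdx n k) Bool) :=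
  (matE n k (n.choose 2)).filter fun M =>
    ∀ e : RowIdx n,
      1 ≤ (Finset.univ.filter fun S => M e S = true).card ∧
      (Finset.univ.filter fun S => M e S = true).card ≤ (n - 2).choose (k - 2) - 1

/-- The polynomial `P_{n,k}(t) = Σ_{M ∈ A'} (−1)^{|M|} t^{|Edges(M)|}` (matrix formulation). -/
noncomputable def Pnk (n k : ℕ) : Polynomial ℤ :=
  ∑ M ∈ matA n k, Polynomial.C ((-1 : ℤ) ^ wt M) * Polynomial.X ^ (mEdges M).card

/-!
Complementation `M ↦ I(n,k) - M` maps `E°` to itself: the column bounds `1 ≤ c ≤ C(k,2) - 1`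
and the row bounds `1 ≤ r ≤ C(n-2,k-2) - 1` are invariant under `c ↦ C(k,2) - c` and
`r ↦ C(n-2,k-2) - r`. Under the hypotheses `|I(n,k)| = C(n,k) C(k,2)` is odd, so complementation
changes the parity of `|M|` and the terms of `E°` in the coefficient of `t^{C(n,2)}` cancel in
pairs.
-/

variable {α : Type*}

lemma card_filter_and_not_add_card_filter [Fintype α] [DecidableEq α] (f g : α → Bool)
    (hgf : ∀ a, g a = true → f a = true) :
    #{a | (f a && !g a) = true} + #{a | g a = true} = #{a | f a = true} := by
  rw [← card_union_of_disjoint (disjoint_filter.mpr fun a _ h => by simp_all)]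
  congr 1
  ext a
  cases hg : g a <;> simp [hg, hgf a]

lemma card_filter_univ_subtype_mem (s : Finset α) (p : α → Prop) [DecidablePred p] :
    #{x : s | p x.1} = #{x ∈ s | p x} := by
  rw [univ_eq_attach, filter_attach, card_map, card_attach]

lemma odd_choose_two_of_mod_four {k : ℕ} (hk : k % 4 = 2 ∨ k % 4 = 3) : Odd (k.choose 2) := by
  have h : k * (k - 1) % 4 = 2 := by
    rcases hk with hk | hk <;>
      rw [Nat.mul_mod, hk, show (k - 1) % 4 = k % 4 - 1 by omega, hk]
  rw [Nat.choose_two_right, Nat.odd_iff]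
  omega

lemma neg_one_pow_add_neg_one_pow_of_odd_add {a b : ℕ} (h : Odd (a + b)) :
    (-1 : ℤ) ^ a + (-1) ^ b = 0 := by
  rcases Nat.even_or_odd a with ha | ha
  · rw [ha.neg_one_pow, ((Nat.odd_add'.mp h).mpr ha).neg_one_pow]; norm_num
  · rw [ha.neg_one_pow, ((Nat.odd_add.mp h).mp ha).neg_one_pow]; norm_num

variable {n k : ℕ}

lemma card_col_Ink (S : ColIdx n k) : #{e | Ink n k e S = true} = k.choose 2 := by
  simp only [Ink, Matrix.of_apply, decide_eq_true_eq]
  rw [card_filter_univ_subtype_mem (p := (· ⊆ S.1))]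
  trans #(S.1.powersetCard 2)
  · congr 1
    ext e
    simp [mem_powersetCard, and_comm]
  · rw [card_powersetCard, (mem_powersetCard.mp S.2).2]

lemma card_row_Ink (hk : 2 ≤ k) (e : RowIdx n) :
    #{S | Ink n k e S = true} = (n - 2).choose (k - 2) := by
  obtain ⟨-, he⟩ := mem_powersetCard.mp e.2
  simp only [Ink, Matrix.of_apply, decide_eq_true_eq]
  rw [card_filter_univ_subtype_mem (p := (e.1 ⊆ ·)),
    card_filter_powersetCard_subset _ _ _ (subset_univ _) (by omega), card_univ,
    Fintype.card_fin, he]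

lemma wt_eq_sum_card_col (M : Matrix (RowIdx n) (ColIdx n k) Bool) :
    wt M = ∑ S, #{e | M e S = true} := by
  rw [wt, card_filter, Fintype.sum_prod_type_right]
  simp only [card_filter]

lemma wt_Ink : wt (Ink n k) = n.choose k * k.choose 2 := by
  rw [wt_eq_sum_card_col]
  simp only [card_col_Ink, sum_const, card_univ, Fintype.card_coe, card_powersetCard,
    Fintype.card_fin, smul_eq_mul]

def inkCompl (M : Matrix (RowIdx n) (ColIdx n k) Bool) : Matrix (RowIdx n) (ColIdx n k) Bool :=
  Matrix.of fun e S => Ink n k e S && !M e S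

section inkCompl

variable {M : Matrix (RowIdx n) (ColIdx n k) Bool}

lemma inkCompl_le_Ink {e : RowIdx n} {S : ColIdx n k} (h : inkCompl M e S = true) :
    Ink n k e S = true :=
  (Bool.and_eq_true _ _).mp h |>.1

lemma inkCompl_inkCompl (hM : ∀ e S, M e S = true → Ink n k e S = true) :
    inkCompl (inkCompl M) = M := by
  ext e S
  cases h : M e S
  · simp [inkCompl, h]
  · simp [inkCompl, h, hM e S h]

lemma wt_inkCompl_add_wt (hM : ∀ e S, M e S = true → Ink n k e S = true) :
    wt (inkCompl M) + wt M = wt (Ink n k) :=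
  card_filter_and_not_add_card_filter (fun p : RowIdx n × ColIdx n k => Ink n k p.1 p.2)
    (fun p => M p.1 p.2) fun p => hM p.1 p.2

lemma card_col_inkCompl_add (hM : ∀ e S, M e S = true → Ink n k e S = true) (S : ColIdx n k) :
    #{e | inkCompl M e S = true} + #{e | M e S = true} = k.choose 2 := by
  rw [← card_col_Ink S]
  exact card_filter_and_not_add_card_filter _ _ fun e => hM e S

lemma card_row_inkCompl_add (hk : 2 ≤ k) (hM : ∀ e S, M e S = true → Ink n k e S = true)
    (e : RowIdx n) :
    #{S | inkCompl M e S = true} + #{S | M e S = true} = (n - 2).choose (k - 2) := by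
  rw [← card_row_Ink hk e]
  exact card_filter_and_not_add_card_filter _ _ fun S => hM e S

end inkCompl

lemma card_mEdges_of_forall_exists {M : Matrix (RowIdx n) (ColIdx n k) Bool}
    (h : ∀ e, ∃ S, M e S = true) : #(mEdges M) = n.choose 2 := by
  rw [show mEdges M = univ from eq_univ_of_forall fun e => by simpa [mEdges] using h e,
    card_univ, Fintype.card_coe, card_powersetCard, card_univ, Fintype.card_fin]

lemma mem_matEcirc_iff {M : Matrix (RowIdx n) (ColIdx n k) Bool} :
    M ∈ matEcirc n k ↔
      (∀ e S, M e S = true → Ink n k e S = true) ∧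
      (∀ S, 1 ≤ #{e | M e S = true} ∧ #{e | M e S = true} ≤ k.choose 2 - 1) ∧
      #(mEdges M) = n.choose 2 ∧
      ∀ e, 1 ≤ #{S | M e S = true} ∧ #{S | M e S = true} ≤ (n - 2).choose (k - 2) - 1 := by
  simp only [matEcirc, matE, matA, mem_filter, mem_univ, true_and, and_assoc]

lemma inkCompl_mem_matEcirc (hk : 2 ≤ k) {M : Matrix (RowIdx n) (ColIdx n k) Bool}
    (hM : M ∈ matEcirc n k) : inkCompl M ∈ matEcirc n k := by
  obtain ⟨hle, hcol, -, hrow⟩ := mem_matEcirc_iff.mp hM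
  have hrow' : ∀ e, 1 ≤ #{S | inkCompl M e S = true} ∧
      #{S | inkCompl M e S = true} ≤ (n - 2).choose (k - 2) - 1 := fun e => by
    have := card_row_inkCompl_add hk hle e
    have := hrow e
    omega
  refine mem_matEcirc_iff.mpr ⟨fun _ _ => inkCompl_le_Ink, fun S => ?_, ?_, hrow'⟩
  · have := card_col_inkCompl_add hle S
    have := hcol S
    omega
  · refine card_mEdges_of_forall_exists fun e => ?_
    obtain ⟨S, hS⟩ := card_pos.mp (hrow' e).1
    exact ⟨S, (mem_filter.mp hS).2⟩

lemma sum_matEcirc_neg_one_pow_wt (hk : 2 ≤ k) (hkmod : k % 4 = 2 ∨ k % 4 = 3)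
    (hodd : Odd (n.choose k)) : ∑ M ∈ matEcirc n k, (-1 : ℤ) ^ wt M = 0 := by
  have hcancel : ∀ M ∈ matEcirc n k, (-1 : ℤ) ^ wt M + (-1) ^ wt (inkCompl M) = 0 :=
    fun M hM => by
      refine neg_one_pow_add_neg_one_pow_of_odd_add ?_
      rw [add_comm, wt_inkCompl_add_wt (mem_matEcirc_iff.mp hM).1, wt_Ink]
      exact hodd.mul (odd_choose_two_of_mod_four hkmod)
  refine sum_involution (fun M _ => inkCompl M) hcancel (fun M hM hne hfix => hne ?_)
    (fun M hM => inkCompl_mem_matEcirc hk hM)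
    (fun M hM => inkCompl_inkCompl (mem_matEcirc_iff.mp hM).1)
  have := hcancel M hM
  rw [hfix] at this
  omega

lemma coeff_Pnk (m : ℕ) : (Pnk n k).coeff m = ∑ M ∈ matE n k m, (-1 : ℤ) ^ wt M := by
  rw [Pnk, Polynomial.finsetSum_coeff, matE, sum_filter]
  refine sum_congr rfl fun M _ => ?_
  rw [Polynomial.coeff_C_mul, Polynomial.coeff_X_pow]
  split_ifs <;> simp_all [eq_comm]

theorem stmt_14_general (n k : ℕ) (hk : 2 ≤ k)
    (hkmod : k % 4 = 2 ∨ k % 4 = 3) (hodd : Odd (n.choose k)) :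
    (Pnk n k).coeff (n * (n - 1) / 2) =
      ∑ M ∈ matE n k (n * (n - 1) / 2) \ matEcirc n k, (-1 : ℤ) ^ wt M := by
  have hsub : matEcirc n k ⊆ matE n k (n * (n - 1) / 2) :=
    Nat.choose_two_right n ▸ filter_subset _ _
  rw [coeff_Pnk, ← sum_sdiff hsub, sum_matEcirc_neg_one_pow_wt hk hkmod hodd, add_zero]

theorem stmt_14 (n k : ℕ) (hk : 2 ≤ k) (hkn : k ≤ n)
    (hkmod : k % 4 = 2 ∨ k % 4 = 3) (hodd : Odd (n.choose k)) :
    (Pnk n k).coeff (n * (n - 1) / 2) =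
      ∑ M ∈ matE n k (n * (n - 1) / 2) \ matEcirc n k, (-1 : ℤ) ^ wt M :=
  stmt_14_general n k hk hkmod hodd
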